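/- arXiv:1711.03223 — 3 statements merged into one kernel-verified Lean document; each statement's English description precedes it below -/
import Mathlib

section
/- Assume g ≡ 0. Let β be an admissible trading intensity and S = S^β the solution of the Riccati equation with S_t > 0 for all t ∈ [0,T) and lim_{t→T⁻} S_t = 0. Suppose there is a constant α₀ > 0 such that β_t = α₀ φ₂(t,0) (σᶻ_t)² / (2 S_t) for all t ∈ [0,T). Then for every t ∈ [0,T): S_t = φ₂(t,0)² ∫_t^T ( α₀² (σᶻ_r)² / 4 − φ₂(0,r)² (σᵛ_r)² ) dr, and moreover α₀² / 4 = ( s₀ + ∫_0^T φ₂(0,r)² (σᵛ_r)² dr ) / ∫_0^T (σᶻ_t)² dt. -/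
open MeasureTheory Filter Set intervalIntegral

noncomputable section

/-- An admissible trading intensity: continuous and positive on `[0,T)`, with a limit
at `T⁻` that is either a positive real or `+∞`. -/
def Admissible (T : ℝ) (β : ℝ → ℝ) : Prop :=
  ContinuousOn β (Set.Ico 0 T) ∧ (∀ t ∈ Set.Ico 0 T, 0 < β t) ∧
    ((∃ l : ℝ, 0 < l ∧ Filter.Tendsto β (nhdsWithin T (Set.Ico 0 T)) (nhds l)) ∨
      Filter.Tendsto β (nhdsWithin T (Set.Ico 0 T)) Filter.atTop)

/-- `S` is a C¹ solution on `[0,T)` of the Riccati equation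
`S' = (σᵛ)² + 2 f S − (β S/σᶻ)²`, `S 0 = s₀`. -/
def RiccatiSol (T s₀ : ℝ) (f σv σz β S : ℝ → ℝ) : Prop :=
  S 0 = s₀ ∧ ∀ t ∈ Set.Ico 0 T,
    HasDerivWithinAt S ((σv t) ^ 2 + 2 * f t * S t - (β t * S t / σz t) ^ 2)
      (Set.Ico 0 T) t

/-- `φ₁(a,b) = exp(∫_b^a (f_u − k_u) du)` where `k = β² S/(σᶻ)²`. -/
def phi1 (f σz β S : ℝ → ℝ) (a b : ℝ) : ℝ :=
  Real.exp (∫ u in b..a, f u - (β u) ^ 2 * S u / (σz u) ^ 2)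

/-- `φ₂(a,b) = exp(∫_b^a f_u du)` (the case `g ≡ 0`). -/
def phi2 (f : ℝ → ℝ) (a b : ℝ) : ℝ :=
  Real.exp (∫ u in b..a, f u)

lemma mem_nhdsWithin_Ici_of_Ico' {T t : ℝ} (ht : t ∈ Set.Ico 0 T) :
    Set.Ico (0:ℝ) T ∈ nhdsWithin t (Set.Ici t) := by
  refine Filter.mem_of_superset
    (Filter.inter_mem (mem_nhdsWithin_of_mem_nhds (Iio_mem_nhds ht.2)) self_mem_nhdsWithin) ?_
  rintro x ⟨hx1, hx2⟩
  exact ⟨le_trans ht.1 hx2, hx1⟩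

lemma primitive_hasDerivWithinAt' {T : ℝ} {f : ℝ → ℝ} (hf : ContinuousOn f (Set.Icc 0 T))
    {t : ℝ} (ht : t ∈ Set.Ico 0 T) :
    HasDerivWithinAt (fun u => ∫ x in (0:ℝ)..u, f x) (f t) (Set.Ici t) t := by
  have hsub : Set.Icc (0:ℝ) t ⊆ Set.Icc 0 T := Set.Icc_subset_Icc le_rfl ht.2.le
  have hmem : Set.Icc (0:ℝ) T ∈ nhdsWithin t (Set.Ioi t) := by
    refine Filter.mem_of_superset
      (Filter.inter_mem (mem_nhdsWithin_of_mem_nhds (Iio_mem_nhds ht.2)) self_mem_nhdsWithin) ?_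
    rintro x ⟨hx1, hx2⟩
    exact ⟨le_trans ht.1 (le_of_lt hx2), le_of_lt hx1⟩
  refine intervalIntegral.integral_hasDerivWithinAt_right (t := Set.Ioi t) ?_ ?_ ?_
  · exact (hf.mono (by rw [Set.uIcc_of_le ht.1]; exact hsub)).intervalIntegrable
  · exact ⟨Set.Icc 0 T, hmem, hf.aestronglyMeasurable measurableSet_Icc⟩
  · exact (hf.continuousWithinAt ⟨ht.1, ht.2.le⟩).mono_of_mem_nhdsWithin hmem

/-- with `g ≡ 0` and `β_t = α₀ φ₂(t,0)(σᶻ_t)²/(2S_t)`, the explicit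
formula for `S` and the value of `α₀`. -/
theorem explicit_S_for_optimal_beta
    (T s₀ c : ℝ) (hT : 0 < T) (hs₀ : 0 < s₀) (hc : 0 < c)
    (f σv σz : ℝ → ℝ)
    (hf : ContinuousOn f (Set.Icc 0 T))
    (hσv : ContinuousOn σv (Set.Icc 0 T)) (hσz : ContinuousOn σz (Set.Icc 0 T))
    (hσvc : ∀ t ∈ Set.Icc 0 T, c ≤ σv t) (hσzc : ∀ t ∈ Set.Icc 0 T, c ≤ σz t)
    (β : ℝ → ℝ) (hβ : Admissible T β)
    (S : ℝ → ℝ) (hS : RiccatiSol T s₀ f σv σz β S)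
    (hSpos : ∀ t ∈ Set.Ico 0 T, 0 < S t)
    (hSlim : Filter.Tendsto S (nhdsWithin T (Set.Ico 0 T)) (nhds 0))
    (α₀ : ℝ) (hα₀ : 0 < α₀)
    (hβeq : ∀ t ∈ Set.Ico 0 T, β t = α₀ * phi2 f t 0 * (σz t) ^ 2 / (2 * S t)) :
    (∀ t ∈ Set.Ico 0 T,
      S t = (phi2 f t 0) ^ 2 *
        ∫ r in t..T, (α₀ ^ 2 * (σz r) ^ 2 / 4 - (phi2 f 0 r) ^ 2 * (σv r) ^ 2)) ∧
    α₀ ^ 2 / 4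
      = (s₀ + ∫ r in (0 : ℝ)..T, (phi2 f 0 r) ^ 2 * (σv r) ^ 2)
        / ∫ t in (0 : ℝ)..T, (σz t) ^ 2 := by
  set F : ℝ → ℝ := fun u => ∫ x in (0:ℝ)..u, f x with hFdef
  set E : ℝ → ℝ := fun u => Real.exp (-2 * F u) with hEdef
  set Y : ℝ → ℝ := fun u => E u * S u with hYdef
  set G : ℝ → ℝ := fun r => (phi2 f 0 r) ^ 2 * (σv r) ^ 2 - α₀ ^ 2 * (σz r) ^ 2 / 4 with hGdef
  set H : ℝ → ℝ := fun u => s₀ + ∫ r in (0:ℝ)..u, G r with hHdef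
  have hIoT : Set.Ico (0:ℝ) T ⊆ Set.Icc 0 T := Set.Ico_subset_Icc_self
  -- basic identities for phi2
  have hphi0 : ∀ r : ℝ, phi2 f 0 r = Real.exp (-(F r)) := by
    intro r; rw [phi2, intervalIntegral.integral_symm]
  have hphit : ∀ r : ℝ, phi2 f r 0 = Real.exp (F r) := fun r => rfl
  -- continuity of F on Icc 0 T
  have hFcont : ContinuousOn F (Set.Icc 0 T) := by
    have := intervalIntegral.continuousOn_primitive_interval
      (f := f) (a := (0:ℝ)) (b := T) (μ := volume)
      (by rw [Set.uIcc_of_le hT.le]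
          exact (hf.mono Set.Subset.rfl).integrableOn_compact isCompact_Icc)
    rwa [Set.uIcc_of_le hT.le] at this
  have hEcont : ContinuousOn E (Set.Icc 0 T) := (hFcont.const_smul (-2:ℝ)).rexp
  have hGcont : ContinuousOn G (Set.Icc 0 T) := by
    have h1 : ContinuousOn (fun r => (phi2 f 0 r)) (Set.Icc 0 T) := by
      have : ContinuousOn (fun r => Real.exp (-(F r))) (Set.Icc 0 T) := hFcont.neg.rexp
      exact this.congr fun r _ => hphi0 r
    exact ((h1.pow 2).mul (hσv.pow 2)).sub
      (((continuousOn_const.mul (hσz.pow 2)).div_const 4))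
  have hGint : ∀ a b, a ∈ Set.Icc (0:ℝ) T → b ∈ Set.Icc (0:ℝ) T →
      IntervalIntegrable G volume a b := fun a b ha hb =>
    (hGcont.mono (Set.uIcc_subset_Icc ha hb)).intervalIntegrable
  have hHcont : ContinuousOn H (Set.Icc 0 T) := by
    have := intervalIntegral.continuousOn_primitive_interval
      (f := G) (a := (0:ℝ)) (b := T) (μ := volume)
      (by rw [Set.uIcc_of_le hT.le]
          exact hGcont.integrableOn_compact isCompact_Icc)
    rw [Set.uIcc_of_le hT.le] at this
    exact continuousOn_const.add this
  have hScont : ContinuousOn S (Set.Ico 0 T) :=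
    fun x hx => ((hS.2 x hx).continuousWithinAt)
  -- derivative of Y within Ici t
  have hYderiv : ∀ t ∈ Set.Ico 0 T, HasDerivWithinAt Y (G t) (Set.Ici t) t := by
    intro t ht
    have hF : HasDerivWithinAt F (f t) (Set.Ici t) t := primitive_hasDerivWithinAt' hf ht
    have hE : HasDerivWithinAt E (Real.exp (-2 * F t) * (-2 * f t)) (Set.Ici t) t :=
      (hF.const_mul (-2)).exp
    have hS' : HasDerivWithinAt S
        ((σv t) ^ 2 + 2 * f t * S t - (β t * S t / σz t) ^ 2) (Set.Ici t) t :=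
      (hS.2 t ht).mono_of_mem_nhdsWithin (mem_nhdsWithin_Ici_of_Ico' ht)
    have hY := hE.mul hS'
    have hSne : S t ≠ 0 := (hSpos t ht).ne'
    have hzne : σz t ≠ 0 := (lt_of_lt_of_le hc (hσzc t (hIoT ht))).ne'
    have hexne : Real.exp (F t) ≠ 0 := Real.exp_ne_zero _
    have hkey : (β t * S t / σz t) ^ 2
        = α₀ ^ 2 * (Real.exp (F t)) ^ 2 * (σz t) ^ 2 / 4 := by
      rw [hβeq t ht, hphit]
      field_simp
      ring
    have hE2 : E t * (Real.exp (F t)) ^ 2 = 1 := by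
      rw [hEdef]
      simp only
      rw [sq, ← Real.exp_add, ← Real.exp_add, show -2 * F t + (F t + F t) = 0 by ring,
        Real.exp_zero]
    have hEneg : E t = (Real.exp (-(F t))) ^ 2 := by
      rw [hEdef]; simp only
      rw [sq, ← Real.exp_add]; ring_nf
    have heq : Real.exp (-2 * F t) * (-2 * f t) * S t
        + E t * ((σv t) ^ 2 + 2 * f t * S t - (β t * S t / σz t) ^ 2) = G t := by
      rw [hkey, hGdef]
      simp only [hphi0]
      have hE' : Real.exp (-2 * F t) = E t := rfl
      rw [hE', ← hEneg]
      have : E t * (α₀ ^ 2 * Real.exp (F t) ^ 2 * σz t ^ 2 / 4)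
          = α₀ ^ 2 * σz t ^ 2 / 4 := by
        rw [show E t * (α₀ ^ 2 * Real.exp (F t) ^ 2 * σz t ^ 2 / 4)
            = (E t * Real.exp (F t) ^ 2) * (α₀ ^ 2 * σz t ^ 2 / 4) by ring, hE2, one_mul]
      nlinarith [this]
    rw [← heq]
    exact hY
  have hHderiv : ∀ t ∈ Set.Ico 0 T, HasDerivWithinAt H (G t) (Set.Ici t) t := by
    intro t ht
    exact (primitive_hasDerivWithinAt' hGcont ht).const_add s₀
  -- Y = H on Ico 0 T
  have hYH : ∀ t ∈ Set.Ico 0 T, Y t = H t := by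
    intro t ht
    have hsub : Set.Ico (0:ℝ) t ⊆ Set.Ico 0 T := Set.Ico_subset_Ico le_rfl ht.2.le
    have hsub2 : Set.Icc (0:ℝ) t ⊆ Set.Ico 0 T := fun x hx => ⟨hx.1, lt_of_le_of_lt hx.2 ht.2⟩
    have hYcont : ContinuousOn Y (Set.Icc 0 t) :=
      ((hEcont.mono (hsub2.trans hIoT)).mul (hScont.mono hsub2))
    have hY0 : Y 0 = H 0 := by
      have hF0 : F 0 = 0 := intervalIntegral.integral_same
      have hE0 : E 0 = 1 := by
        simp only [hEdef]; rw [hF0]; norm_num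
      simp only [hYdef, hHdef, hS.1, hE0, one_mul, intervalIntegral.integral_same, add_zero]
    exact eq_of_has_deriv_right_eq
      (fun x hx => hYderiv x (hsub hx)) (fun x hx => hHderiv x (hsub hx))
      hYcont (hHcont.mono (Set.Icc_subset_Icc le_rfl ht.2.le)) hY0 t
      ⟨ht.1, le_rfl⟩
  -- Limit: H T = 0
  have hne : (nhdsWithin T (Set.Ico 0 T)).NeBot := by
    rw [← mem_closure_iff_nhdsWithin_neBot, closure_Ico hT.ne]
    exact ⟨hT.le, le_rfl⟩
  have hHT : H T = 0 := by
    have hTmem : T ∈ Set.Icc (0:ℝ) T := ⟨hT.le, le_rfl⟩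
    have h1 : Tendsto Y (nhdsWithin T (Set.Ico 0 T)) (nhds (E T * 0)) := by
      exact ((hEcont.continuousWithinAt hTmem).mono hIoT).tendsto.mul hSlim
    have h2 : Tendsto H (nhdsWithin T (Set.Ico 0 T)) (nhds (H T)) :=
      ((hHcont.continuousWithinAt hTmem).mono hIoT).tendsto
    have h3 : Tendsto Y (nhdsWithin T (Set.Ico 0 T)) (nhds (H T)) :=
      h2.congr' (Filter.eventually_of_mem self_mem_nhdsWithin fun x hx => (hYH x hx).symm)
    have := tendsto_nhds_unique h1 h3
    rw [mul_zero] at this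
    exact this.symm
  have hint0T : s₀ + ∫ r in (0:ℝ)..T, G r = 0 := hHT
  have hTmem : T ∈ Set.Icc (0:ℝ) T := ⟨hT.le, le_rfl⟩
  constructor
  · intro t ht
    have htmem : t ∈ Set.Icc (0:ℝ) T := hIoT ht
    have hsplit : (∫ r in (0:ℝ)..t, G r) + ∫ r in t..T, G r = ∫ r in (0:ℝ)..T, G r :=
      intervalIntegral.integral_add_adjacent_intervals
        (hGint 0 t ⟨le_rfl, hT.le⟩ htmem) (hGint t T htmem hTmem)
    have hYt : E t * S t = - ∫ r in t..T, G r := by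
      have := hYH t ht
      rw [hYdef, hHdef] at this
      simp only at this
      rw [this]
      linarith [hint0T, hsplit]
    have hneg : (∫ r in t..T, (α₀ ^ 2 * (σz r) ^ 2 / 4 - (phi2 f 0 r) ^ 2 * (σv r) ^ 2))
        = - ∫ r in t..T, G r := by
      rw [← intervalIntegral.integral_neg]
      congr 1
      funext r
      rw [hGdef]
      ring
    have hE2 : (phi2 f t 0) ^ 2 * E t = 1 := by
      rw [hphit, hEdef]
      simp only
      rw [sq, ← Real.exp_add, ← Real.exp_add, show F t + F t + -2 * F t = 0 by ring,
        Real.exp_zero]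
    calc S t = ((phi2 f t 0) ^ 2 * E t) * S t := by rw [hE2, one_mul]
      _ = (phi2 f t 0) ^ 2 * (E t * S t) := by ring
      _ = _ := by rw [hYt, hneg]
  · -- value of α₀
    have hintsub : (∫ r in (0:ℝ)..T, G r)
        = (∫ r in (0:ℝ)..T, (phi2 f 0 r) ^ 2 * (σv r) ^ 2)
          - α₀ ^ 2 / 4 * ∫ t in (0:ℝ)..T, (σz t) ^ 2 := by
      have hi1 : IntervalIntegrable (fun r => (phi2 f 0 r) ^ 2 * (σv r) ^ 2) volume 0 T := by
        apply ContinuousOn.intervalIntegrable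
        rw [Set.uIcc_of_le hT.le]
        have h1 : ContinuousOn (fun r => (phi2 f 0 r)) (Set.Icc 0 T) :=
          (hFcont.neg.rexp).congr fun r _ => hphi0 r
        exact (h1.pow 2).mul (hσv.pow 2)
      have hi2 : IntervalIntegrable (fun r => α₀ ^ 2 * (σz r) ^ 2 / 4) volume 0 T := by
        apply ContinuousOn.intervalIntegrable
        rw [Set.uIcc_of_le hT.le]
        exact (continuousOn_const.mul (hσz.pow 2)).div_const 4
      rw [hGdef]
      rw [intervalIntegral.integral_sub hi1 hi2]
      congr 1
      rw [show (fun r => α₀ ^ 2 * (σz r) ^ 2 / 4) = fun r => (α₀ ^ 2 / 4) * (σz r) ^ 2 by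
        funext r; ring]
      rw [intervalIntegral.integral_const_mul]
    have hBpos : 0 < ∫ t in (0:ℝ)..T, (σz t) ^ 2 := by
      have hle : ∀ x ∈ Set.Icc (0:ℝ) T, c ^ 2 ≤ (σz x) ^ 2 := by
        intro x hx
        have := hσzc x hx
        nlinarith
      have h1 : IntervalIntegrable (fun _ : ℝ => c ^ 2) volume 0 T :=
        intervalIntegrable_const
      have h2 : IntervalIntegrable (fun t => (σz t) ^ 2) volume 0 T := by
        apply ContinuousOn.intervalIntegrable
        rw [Set.uIcc_of_le hT.le]
        exact hσz.pow 2
      have := intervalIntegral.integral_mono_on hT.le h1 h2 hle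
      rw [intervalIntegral.integral_const, smul_eq_mul] at this
      nlinarith [mul_pos hT (pow_pos hc 2)]
    rw [eq_div_iff hBpos.ne']
    linarith [hint0T, hintsub]
end
end

section
/- Assume g ≡ 0. Let β be an admissible trading intensity and S = S^β the solution of the Riccati equation with S_t > 0 for all t ∈ [0,T) and lim_{t→T⁻} S_t = 0, and suppose β_t = α₀ φ₂(t,0) (σᶻ_t)² / (2 S_t) for all t ∈ [0,T), where α₀ > 0 is a constant. Then the value of the reduced objective is J̄(β) := ∫_0^T β_t S_t φ₁(0,t) φ₃(T,t) dt = (α₀ / 2) ∫_0^T (σᶻ_t)² dt; consequently the expected payoff J(β) = φ₂(T,0) J̄(β) equals (α₀ φ₂(T,0) / 2) ∫_0^T (σᶻ_t)² dt. -/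
open MeasureTheory Filter Set intervalIntegral

noncomputable section

/-- `φ₃(a,b) = ∫_b^a φ₁(u,0) φ₂(0,u) k_u du` where `k = β² S/(σᶻ)²` (case `g ≡ 0`). -/
def phi3 (f σz β S : ℝ → ℝ) (a b : ℝ) : ℝ :=
  ∫ u in b..a, phi1 f σz β S u 0 * phi2 f 0 u * ((β u) ^ 2 * S u / (σz u) ^ 2)

def kfun (σz β S : ℝ → ℝ) (u : ℝ) : ℝ := (β u) ^ 2 * S u / (σz u) ^ 2

def Kfun (σz β S : ℝ → ℝ) (s : ℝ) : ℝ := ∫ u in (0:ℝ)..s, kfun σz β S u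

def Ffun (f : ℝ → ℝ) (s : ℝ) : ℝ := ∫ u in (0:ℝ)..s, f u

/-- with `g ≡ 0`, `S → 0` at `T⁻`, and
`β_t = α₀ φ₂(t,0)(σᶻ_t)²/(2S_t)`, the reduced objective equals
`(α₀/2)∫_0^T (σᶻ)²` and the payoff `J(β) = φ₂(T,0) J̄(β)` equals
`(α₀ φ₂(T,0)/2)∫_0^T (σᶻ)²`. -/
theorem value_of_reduced_objective
    (T s₀ c : ℝ) (hT : 0 < T) (hs₀ : 0 < s₀) (hc : 0 < c)
    (f σv σz : ℝ → ℝ)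
    (hf : ContinuousOn f (Set.Icc 0 T))
    (hσv : ContinuousOn σv (Set.Icc 0 T)) (hσz : ContinuousOn σz (Set.Icc 0 T))
    (hσvc : ∀ t ∈ Set.Icc 0 T, c ≤ σv t) (hσzc : ∀ t ∈ Set.Icc 0 T, c ≤ σz t)
    (β : ℝ → ℝ) (hβ : Admissible T β)
    (S : ℝ → ℝ) (hS : RiccatiSol T s₀ f σv σz β S)
    (hSpos : ∀ t ∈ Set.Ico 0 T, 0 < S t)
    (hSlim : Filter.Tendsto S (nhdsWithin T (Set.Ico 0 T)) (nhds 0))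
    (α₀ : ℝ) (hα₀ : 0 < α₀)
    (hβeq : ∀ t ∈ Set.Ico 0 T, β t = α₀ * phi2 f t 0 * (σz t) ^ 2 / (2 * S t))
    (L3 : ℝ → ℝ)
    (hL3 : ∀ t ∈ Set.Ico 0 T,
      Filter.Tendsto (fun s => phi3 f σz β S s t)
        (nhdsWithin T (Set.Ico 0 T)) (nhds (L3 t))) :
    (∫ t in (0 : ℝ)..T, β t * S t * phi1 f σz β S 0 t * L3 t)
        = α₀ / 2 * ∫ t in (0 : ℝ)..T, (σz t) ^ 2 ∧
      phi2 f T 0 * (∫ t in (0 : ℝ)..T, β t * S t * phi1 f σz β S 0 t * L3 t)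
        = α₀ * phi2 f T 0 / 2 * ∫ t in (0 : ℝ)..T, (σz t) ^ 2 := by
  obtain ⟨hβcont, hβpos, -⟩ := hβ
  obtain ⟨hS0, hSderiv⟩ := hS
  set l := nhdsWithin T (Set.Ico 0 T) with hl
  have hσz0 : ∀ t ∈ Set.Icc (0:ℝ) T, σz t ≠ 0 :=
    fun t ht => ne_of_gt (lt_of_lt_of_le hc (hσzc t ht))
  have hScont : ContinuousOn S (Set.Ico 0 T) := fun t ht => (hSderiv t ht).continuousWithinAt
  have hkcont : ContinuousOn (kfun σz β S) (Set.Ico 0 T) := by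
    apply ContinuousOn.div
    · exact (hβcont.pow 2).mul hScont
    · exact (hσz.mono Set.Ico_subset_Icc_self).pow 2
    · intro t ht; exact pow_ne_zero _ (hσz0 t (Set.Ico_subset_Icc_self ht))
  have hsub : ∀ s : ℝ, s < T → Set.Icc (0:ℝ) s ⊆ Set.Ico 0 T :=
    fun s hsT x hx => ⟨hx.1, lt_of_le_of_lt hx.2 hsT⟩
  have hkint : ∀ a b : ℝ, 0 ≤ a → a ≤ b → b < T →
      IntervalIntegrable (kfun σz β S) volume a b := by
    intro a b ha hab hbT
    apply ContinuousOn.intervalIntegrable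
    rw [Set.uIcc_of_le hab]
    exact hkcont.mono (fun x hx => ⟨le_trans ha hx.1, lt_of_le_of_lt hx.2 hbT⟩)
  have hfint : ∀ a b : ℝ, 0 ≤ a → a ≤ b → b ≤ T → IntervalIntegrable f volume a b := by
    intro a b ha hab hbT
    apply ContinuousOn.intervalIntegrable
    rw [Set.uIcc_of_le hab]
    exact hf.mono (fun x hx => ⟨le_trans ha hx.1, le_trans hx.2 hbT⟩)
  -- phi rewriting lemmas
  have hphi2F : ∀ t : ℝ, phi2 f t 0 = Real.exp (Ffun f t) := fun t => rfl
  have hphi20 : ∀ t : ℝ, phi2 f 0 t = Real.exp (-(Ffun f t)) := by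
    intro t
    show Real.exp (∫ u in t..(0:ℝ), f u) = _
    rw [intervalIntegral.integral_symm 0 t]
    rfl
  have hphi1a : ∀ u : ℝ, 0 ≤ u → u < T →
      phi1 f σz β S u 0 = Real.exp (Ffun f u - Kfun σz β S u) := by
    intro u hu huT
    show Real.exp (∫ x in (0:ℝ)..u, f x - kfun σz β S x) = _
    rw [intervalIntegral.integral_sub (hfint 0 u le_rfl hu huT.le) (hkint 0 u le_rfl hu huT)]
    rfl
  have hphi1b : ∀ t : ℝ, 0 ≤ t → t < T →
      phi1 f σz β S 0 t = Real.exp (Kfun σz β S t - Ffun f t) := by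
    intro t ht htT
    show Real.exp (∫ x in t..(0:ℝ), f x - kfun σz β S x) = _
    rw [intervalIntegral.integral_symm 0 t,
      intervalIntegral.integral_sub (hfint 0 t le_rfl ht htT.le) (hkint 0 t le_rfl ht htT)]
    show Real.exp (-(Ffun f t - Kfun σz β S t)) = _
    rw [neg_sub]
  -- derivative and continuity of K
  have hKderiv : ∀ x : ℝ, 0 < x → x < T → HasDerivAt (Kfun σz β S) (kfun σz β S x) x := by
    intro x hx0 hxT
    have hca : ContinuousAt (kfun σz β S) x :=
      (hkcont x ⟨hx0.le, hxT⟩).continuousAt (Ico_mem_nhds hx0 hxT)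
    refine intervalIntegral.integral_hasDerivAt_right (hkint 0 x le_rfl hx0.le hxT) ?_ hca
    exact ContinuousAt.stronglyMeasurableAtFilter isOpen_Ioo
      (fun y hy => (hkcont y ⟨hy.1.le, hy.2⟩).continuousAt (Ico_mem_nhds hy.1 hy.2))
      x ⟨hx0, hxT⟩
  have hKcont : ∀ b : ℝ, 0 ≤ b → b < T → ContinuousOn (Kfun σz β S) (Set.Icc 0 b) := by
    intro b hb hbT
    have h1 : IntegrableOn (kfun σz β S) (Set.uIcc 0 b) := by
      rw [Set.uIcc_of_le hb]
      exact (hkcont.mono (hsub b hbT)).integrableOn_Icc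
    have h2 := intervalIntegral.continuousOn_primitive_interval h1
    rw [Set.uIcc_of_le hb] at h2
    exact h2
  -- closed form for phi3
  have hphi3 : ∀ t : ℝ, 0 ≤ t → t < T → ∀ s : ℝ, t ≤ s → s < T →
      phi3 f σz β S s t = Real.exp (-(Kfun σz β S t)) - Real.exp (-(Kfun σz β S s)) := by
    intro t ht htT s hts hsT
    have hIccsub : Set.Icc t s ⊆ Set.Ico 0 T :=
      fun x hx => ⟨le_trans ht hx.1, lt_of_le_of_lt hx.2 hsT⟩
    have hIcc0s : Set.Icc t s ⊆ Set.Icc 0 s := Set.Icc_subset_Icc ht le_rfl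
    have hKc : ContinuousOn (Kfun σz β S) (Set.Icc t s) :=
      (hKcont s (le_trans ht hts) hsT).mono hIcc0s
    have hint : (∫ u in t..s, phi1 f σz β S u 0 * phi2 f 0 u * (kfun σz β S u))
        = ∫ u in t..s, Real.exp (-(Kfun σz β S u)) * kfun σz β S u := by
      apply intervalIntegral.integral_congr
      intro u hu
      rw [Set.uIcc_of_le hts] at hu
      have hu' := hIccsub hu
      show phi1 f σz β S u 0 * phi2 f 0 u * kfun σz β S u
          = Real.exp (-(Kfun σz β S u)) * kfun σz β S u
      rw [hphi1a u hu'.1 hu'.2, hphi20 u, ← Real.exp_add,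
        show Ffun f u - Kfun σz β S u + -(Ffun f u) = -(Kfun σz β S u) by ring]
    have hgcont : ContinuousOn (fun u => -Real.exp (-(Kfun σz β S u))) (Set.Icc t s) :=
      ((Real.continuous_exp.comp_continuousOn hKc.neg)).neg
    have hderiv : ∀ x ∈ Set.Ioo t s,
        HasDerivWithinAt (fun u => -Real.exp (-(Kfun σz β S u)))
          (Real.exp (-(Kfun σz β S x)) * kfun σz β S x) (Set.Ioi x) x := by
      intro x hx
      have h1 : HasDerivAt (Kfun σz β S) (kfun σz β S x) x :=
        hKderiv x (lt_of_le_of_lt ht hx.1) (lt_trans hx.2 hsT)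
      have h2 := (h1.neg.exp).neg
      have h3 : Real.exp (-(Kfun σz β S x)) * kfun σz β S x
          = -(Real.exp (-(Kfun σz β S x)) * -(kfun σz β S x)) := by ring
      rw [h3]
      exact h2.hasDerivWithinAt
    have hintg : IntervalIntegrable
        (fun u => Real.exp (-(Kfun σz β S u)) * kfun σz β S u) volume t s := by
      apply ContinuousOn.intervalIntegrable
      rw [Set.uIcc_of_le hts]
      exact (Real.continuous_exp.comp_continuousOn hKc.neg).mul (hkcont.mono hIccsub)
    have hftc := intervalIntegral.integral_eq_sub_of_hasDeriv_right_of_le hts hgcont hderiv hintg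
    show (∫ u in t..s, phi1 f σz β S u 0 * phi2 f 0 u * (kfun σz β S u)) = _
    rw [hint, hftc]
    ring
  -- bound for f
  obtain ⟨M, hM⟩ := (isCompact_Icc : IsCompact (Set.Icc (0:ℝ) T)).exists_bound_of_continuousOn hf
  have hM0 : 0 ≤ M := le_trans (norm_nonneg _) (hM 0 ⟨le_rfl, hT.le⟩)
  -- log S identity
  have hlog : ∀ s : ℝ, 0 ≤ s → s < T →
      (∫ u in (0:ℝ)..s, ((σv u) ^ 2 / S u + 2 * f u - kfun σz β S u))
        = Real.log (S s) - Real.log (S 0) := by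
    intro s hs hsT
    have hIcc := hsub s hsT
    have hgcont : ContinuousOn (fun u => Real.log (S u)) (Set.Icc 0 s) :=
      (hScont.mono hIcc).log (fun x hx => ne_of_gt (hSpos x (hIcc hx)))
    have hderiv : ∀ x ∈ Set.Ioo (0:ℝ) s,
        HasDerivWithinAt (fun u => Real.log (S u))
          ((σv x) ^ 2 / S x + 2 * f x - kfun σz β S x) (Set.Ioi x) x := by
      intro x hx
      have hxI : x ∈ Set.Ico (0:ℝ) T := ⟨hx.1.le, lt_trans hx.2 hsT⟩
      have hSx : S x ≠ 0 := ne_of_gt (hSpos x hxI)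
      have hσzx : σz x ≠ 0 := hσz0 x ⟨hx.1.le, (lt_trans hx.2 hsT).le⟩
      have hS' : HasDerivAt S ((σv x) ^ 2 + 2 * f x * S x - (β x * S x / σz x) ^ 2) x :=
        (hSderiv x hxI).hasDerivAt (Ico_mem_nhds hx.1 (lt_trans hx.2 hsT))
      have h1 := hS'.log hSx
      have h2 : ((σv x) ^ 2 + 2 * f x * S x - (β x * S x / σz x) ^ 2) / S x
          = (σv x) ^ 2 / S x + 2 * f x - kfun σz β S x := by
        simp only [kfun]
        field_simp
      rw [← h2]
      exact h1.hasDerivWithinAt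
    have hintg : IntervalIntegrable
        (fun u => (σv u) ^ 2 / S u + 2 * f u - kfun σz β S u) volume 0 s := by
      apply ContinuousOn.intervalIntegrable
      rw [Set.uIcc_of_le hs]
      apply ContinuousOn.sub
      · apply ContinuousOn.add
        · exact ((hσv.mono (Set.Icc_subset_Icc le_rfl hsT.le)).pow 2).div
            (hScont.mono hIcc) (fun x hx => ne_of_gt (hSpos x (hIcc hx)))
        · exact continuousOn_const.mul (hf.mono (Set.Icc_subset_Icc le_rfl hsT.le))
      · exact hkcont.mono hIcc
    exact intervalIntegral.integral_eq_sub_of_hasDeriv_right_of_le hs hgcont hderiv hintg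
  -- lower bound for K
  have hKlb : ∀ s ∈ Set.Ico (0:ℝ) T,
      Real.log s₀ - 2 * M * T - Real.log (S s) ≤ Kfun σz β S s := by
    intro s hs
    have hIcc := hsub s hs.2
    have hacont : ContinuousOn (fun u => (σv u) ^ 2 / S u) (Set.Icc 0 s) :=
      ((hσv.mono (Set.Icc_subset_Icc le_rfl hs.2.le)).pow 2).div
        (hScont.mono hIcc) (fun x hx => ne_of_gt (hSpos x (hIcc hx)))
    have haint : IntervalIntegrable (fun u => (σv u) ^ 2 / S u) volume 0 s := by
      apply ContinuousOn.intervalIntegrable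
      rw [Set.uIcc_of_le hs.1]; exact hacont
    have hbint : IntervalIntegrable (fun u => 2 * f u) volume 0 s :=
      (hfint 0 s le_rfl hs.1 hs.2.le).const_mul 2
    have hsplit : (∫ u in (0:ℝ)..s, ((σv u) ^ 2 / S u + 2 * f u - kfun σz β S u))
        = (∫ u in (0:ℝ)..s, ((σv u) ^ 2 / S u + 2 * f u)) - Kfun σz β S s := by
      rw [intervalIntegral.integral_sub (haint.add hbint) (hkint 0 s le_rfl hs.1 hs.2)]
      rfl
    have hsplit2 : (∫ u in (0:ℝ)..s, ((σv u) ^ 2 / S u + 2 * f u))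
        = (∫ u in (0:ℝ)..s, (σv u) ^ 2 / S u) + ∫ u in (0:ℝ)..s, 2 * f u :=
      intervalIntegral.integral_add haint hbint
    have hanonneg : 0 ≤ ∫ u in (0:ℝ)..s, (σv u) ^ 2 / S u :=
      intervalIntegral.integral_nonneg hs.1
        (fun u hu => div_nonneg (sq_nonneg _) (hSpos u (hIcc hu)).le)
    have hbbd : |∫ u in (0:ℝ)..s, 2 * f u| ≤ 2 * M * T := by
      have h1 : ∀ x ∈ Set.uIoc (0:ℝ) s, ‖2 * f x‖ ≤ 2 * M := by
        intro x hx
        rw [Set.uIoc_of_le hs.1] at hx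
        have : ‖f x‖ ≤ M := hM x ⟨hx.1.le, le_trans hx.2 hs.2.le⟩
        calc ‖2 * f x‖ = 2 * ‖f x‖ := by rw [norm_mul]; norm_num
          _ ≤ 2 * M := by linarith
      have h2 := intervalIntegral.norm_integral_le_of_norm_le_const h1
      rw [Real.norm_eq_abs] at h2
      have h3 : |s - 0| ≤ T := by rw [sub_zero, abs_of_nonneg hs.1]; exact hs.2.le
      calc |∫ u in (0:ℝ)..s, 2 * f u| ≤ 2 * M * |s - 0| := h2
        _ ≤ 2 * M * T := by nlinarith
    have hlogeq := hlog s hs.1 hs.2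
    rw [hsplit, hsplit2, hS0] at hlogeq
    have := abs_le.1 hbbd
    linarith [this.1]
  -- K tends to infinity, exp(-K) tends to 0
  have hlogS : Tendsto (fun s => Real.log (S s)) l atBot := by
    apply Real.tendsto_log_nhdsGT_zero.comp
    rw [tendsto_nhdsWithin_iff]
    exact ⟨hSlim, eventually_mem_nhdsWithin.mono (fun s hs => hSpos s hs)⟩
  have hKtop : Tendsto (Kfun σz β S) l atTop := by
    apply tendsto_atTop_mono' l (eventually_mem_nhdsWithin.mono hKlb)
    have h2 : Tendsto (fun s => -Real.log (S s)) l atTop :=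
      tendsto_neg_atBot_atTop.comp hlogS
    have h3 := tendsto_atTop_add_const_left l (Real.log s₀ - 2 * M * T) h2
    refine h3.congr (fun s => ?_)
    ring
  have hexp0 : Tendsto (fun s => Real.exp (-(Kfun σz β S s))) l (nhds 0) :=
    Real.tendsto_exp_atBot.comp (tendsto_neg_atTop_atBot.comp hKtop)
  have hneBot : l.NeBot := by
    refine mem_closure_iff_nhdsWithin_neBot.1 ?_
    rw [closure_Ico hT.ne]
    exact ⟨hT.le, le_rfl⟩
  -- identify L3
  have hL3eq : ∀ t ∈ Set.Ico (0:ℝ) T, L3 t = Real.exp (-(Kfun σz β S t)) := by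
    intro t ht
    have h1 : Tendsto (fun s => phi3 f σz β S s t) l
        (nhds (Real.exp (-(Kfun σz β S t)) - 0)) := by
      apply Filter.Tendsto.congr' ?_ (tendsto_const_nhds.sub hexp0)
      have hgt : ∀ᶠ s in l, s ∈ Set.Ioi t :=
        eventually_nhdsWithin_of_eventually_nhds (isOpen_Ioi.mem_nhds ht.2)
      filter_upwards [eventually_mem_nhdsWithin, hgt] with s hs hts
      exact (hphi3 t ht.1 ht.2 s (le_of_lt hts) hs.2).symm
    have h2 := tendsto_nhds_unique (hL3 t ht) h1
    rw [h2, sub_zero]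
  -- pointwise value of the integrand
  have hpoint : ∀ t ∈ Set.Ico (0:ℝ) T,
      β t * S t * phi1 f σz β S 0 t * L3 t = α₀ / 2 * (σz t) ^ 2 := by
    intro t ht
    have hSt : S t ≠ 0 := ne_of_gt (hSpos t ht)
    rw [hβeq t ht, hL3eq t ht, hphi1b t ht.1 ht.2, hphi2F t]
    have hE : Real.exp (Ffun f t) * Real.exp (Kfun σz β S t - Ffun f t)
        * Real.exp (-(Kfun σz β S t)) = 1 := by
      rw [← Real.exp_add, ← Real.exp_add,
        show Ffun f t + (Kfun σz β S t - Ffun f t) + -(Kfun σz β S t) = 0 by ring,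
        Real.exp_zero]
    calc α₀ * Real.exp (Ffun f t) * σz t ^ 2 / (2 * S t) * S t
          * Real.exp (Kfun σz β S t - Ffun f t) * Real.exp (-(Kfun σz β S t))
        = α₀ / 2 * σz t ^ 2 * (S t / S t)
          * (Real.exp (Ffun f t) * Real.exp (Kfun σz β S t - Ffun f t)
            * Real.exp (-(Kfun σz β S t))) := by ring
      _ = α₀ / 2 * σz t ^ 2 := by rw [div_self hSt, hE]; ring
  -- final computation
  have haeT : ∀ᵐ x : ℝ, x ≠ T := by
    refine ae_iff.2 ?_
    simp only [not_not]
    simpa [Set.setOf_eq_eq_singleton] using measure_singleton (μ := (volume : Measure ℝ)) T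
  have hIeq : (∫ t in (0:ℝ)..T, β t * S t * phi1 f σz β S 0 t * L3 t)
      = ∫ t in (0:ℝ)..T, α₀ / 2 * (σz t) ^ 2 := by
    apply intervalIntegral.integral_congr_ae
    filter_upwards [haeT] with x hx hmem
    rw [Set.uIoc_of_le hT.le] at hmem
    exact hpoint x ⟨hmem.1.le, lt_of_le_of_ne hmem.2 hx⟩
  rw [hIeq, intervalIntegral.integral_const_mul]
  exact ⟨rfl, by ring⟩
end
end

section
/- Assume g ≡ 0. Let β be an admissible trading intensity and S = S^β the solution of the Riccati equation with S_t > 0 for all t ∈ [0,T). Suppose the first-order condition holds: for every t ∈ [0,T), φ₁(t,0)² φ₂(0,t) (σᶻ_t)² / (2 β_t S_t) = ∫_t^T β_r φ₁(r,0)² φ₂(0,r) dr, the integral on the right being finite and positive. Then the function α_t := 2 β_t S_t / (σᶻ_t)² satisfies α_t = α₀ exp( ∫_0^t f_u du ) = α₀ φ₂(t,0) for all t ∈ [0,T), where α₀ := 2 β_0 s₀ / (σᶻ_0)²; equivalently, β_t = α₀ φ₂(t,0) (σᶻ_t)² / (2 S_t). -/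
open MeasureTheory Filter Set intervalIntegral

noncomputable section

/-- Continuity of a primitive within `[0,T)` for an integrand continuous on `[0,T)`. -/
lemma primCWA (T : ℝ) (g : ℝ → ℝ) (hg : ContinuousOn g (Set.Ico 0 T)) :
    ∀ x ∈ Set.Ico 0 T, ContinuousWithinAt (fun r => ∫ u in (0:ℝ)..r, g u) (Set.Ico 0 T) x := by
  intro x hx
  set b := (x + T) / 2 with hb
  have hxb : x < b := by simp only [hb]; linarith [hx.2]
  have hbT : b < T := by simp only [hb]; linarith [hx.2, hx.1]
  have hb0 : (0:ℝ) ≤ b := le_trans hx.1 hxb.le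
  have hsub : Set.Icc (0:ℝ) b ⊆ Set.Ico 0 T := fun y hy => ⟨hy.1, lt_of_le_of_lt hy.2 hbT⟩
  have hcont : ContinuousOn (fun r => ∫ u in (0:ℝ)..r, g u) (Set.Icc 0 b) := by
    have := continuousOn_primitive_interval (f := g) (a := (0:ℝ)) (b := b) (μ := volume)
      (by rw [Set.uIcc_of_le hb0]; exact ((hg.mono hsub).integrableOn_compact isCompact_Icc))
    rwa [Set.uIcc_of_le hb0] at this
  have hmem : Set.Icc (0:ℝ) b ∈ nhdsWithin x (Set.Ico 0 T) := by
    refine Filter.mem_of_superset (inter_mem_nhdsWithin _ (Iio_mem_nhds hxb)) ?_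
    exact fun y hy => ⟨hy.1.1, hy.2.le⟩
  exact (hcont x ⟨hx.1, hxb.le⟩).mono_of_mem_nhdsWithin hmem

/-- FTC: right derivative of a primitive within `[0,T)`. -/
lemma primHasDeriv (T : ℝ) (g : ℝ → ℝ) (hg : ContinuousOn g (Set.Ico 0 T)) :
    ∀ x ∈ Set.Ico 0 T, HasDerivWithinAt (fun r => ∫ u in (0:ℝ)..r, g u) (g x) (Set.Ici x) x := by
  intro x hx
  have hmem : Set.Ico 0 T ∈ nhdsWithin x (Set.Ioi x) := by
    refine Filter.mem_of_superset (inter_mem_nhdsWithin _ (Iio_mem_nhds hx.2)) ?_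
    exact fun y hy => ⟨le_trans hx.1 hy.1.le, hy.2⟩
  have hII : IntervalIntegrable g volume 0 x := by
    apply ContinuousOn.intervalIntegrable
    rw [Set.uIcc_of_le hx.1]
    exact hg.mono (fun y hy => ⟨hy.1, lt_of_le_of_lt hy.2 hx.2⟩)
  exact intervalIntegral.integral_hasDerivWithinAt_right (t := Set.Ioi x) hII
    ⟨Set.Ico 0 T, hmem, (hg.aestronglyMeasurable measurableSet_Ico)⟩
    ((hg x hx).mono_of_mem_nhdsWithin hmem)

/-- with `g ≡ 0`, the first-order condition
`φ₁(t,0)² φ₂(0,t)(σᶻ_t)²/(2β_t S_t) = ∫_t^T β_r φ₁(r,0)² φ₂(0,r) dr`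
forces `α_t = 2β_t S_t/(σᶻ_t)² = α₀ exp(∫_0^t f) = α₀ φ₂(t,0)` with
`α₀ = 2β_0 s₀/(σᶻ_0)²`, i.e. `β_t = α₀ φ₂(t,0)(σᶻ_t)²/(2S_t)`. -/
theorem first_order_condition_determines_alpha
    (T s₀ c : ℝ) (hT : 0 < T) (hs₀ : 0 < s₀) (hc : 0 < c)
    (f σv σz : ℝ → ℝ)
    (hf : ContinuousOn f (Set.Icc 0 T))
    (hσv : ContinuousOn σv (Set.Icc 0 T)) (hσz : ContinuousOn σz (Set.Icc 0 T))
    (hσvc : ∀ t ∈ Set.Icc 0 T, c ≤ σv t) (hσzc : ∀ t ∈ Set.Icc 0 T, c ≤ σz t)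
    (β : ℝ → ℝ) (hβ : Admissible T β)
    (S : ℝ → ℝ) (hS : RiccatiSol T s₀ f σv σz β S)
    (hSpos : ∀ t ∈ Set.Ico 0 T, 0 < S t)
    (hint : MeasureTheory.IntegrableOn
      (fun r => β r * (phi1 f σz β S r 0) ^ 2 * phi2 f 0 r) (Set.Ico 0 T))
    (hIpos : ∀ t ∈ Set.Ico 0 T,
      0 < ∫ r in t..T, β r * (phi1 f σz β S r 0) ^ 2 * phi2 f 0 r)
    (hFOC : ∀ t ∈ Set.Ico 0 T,
      (phi1 f σz β S t 0) ^ 2 * phi2 f 0 t * (σz t) ^ 2 / (2 * β t * S t)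
        = ∫ r in t..T, β r * (phi1 f σz β S r 0) ^ 2 * phi2 f 0 r) :
    ∀ t ∈ Set.Ico 0 T,
      2 * β t * S t / (σz t) ^ 2
          = 2 * β 0 * s₀ / (σz 0) ^ 2 * Real.exp (∫ u in (0 : ℝ)..t, f u) ∧
        2 * β t * S t / (σz t) ^ 2 = 2 * β 0 * s₀ / (σz 0) ^ 2 * phi2 f t 0 ∧
        β t = 2 * β 0 * s₀ / (σz 0) ^ 2 * phi2 f t 0 * (σz t) ^ 2 / (2 * S t) := by
  obtain ⟨hβc, hβpos, -⟩ := hβ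
  obtain ⟨hS0, hSode⟩ := hS
  have hsub : Set.Ico 0 T ⊆ Set.Icc 0 T := Set.Ico_subset_Icc_self
  have hσzpos : ∀ t ∈ Set.Icc 0 T, 0 < σz t := fun t ht => lt_of_lt_of_le hc (hσzc t ht)
  have hScont : ContinuousOn S (Set.Ico 0 T) := fun x hx => (hSode x hx).continuousWithinAt
  have hkcont : ContinuousOn (fun u => β u ^ 2 * S u / σz u ^ 2) (Set.Ico 0 T) :=
    ((hβc.pow 2).mul hScont).div ((hσz.mono hsub).pow 2)
      (fun x hx => pow_ne_zero 2 (ne_of_gt (hσzpos x (hsub hx))))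
  have hfkcont : ContinuousOn (fun u => f u - β u ^ 2 * S u / σz u ^ 2) (Set.Ico 0 T) :=
    (hf.mono hsub).sub hkcont
  set h : ℝ → ℝ := fun r => β r * (phi1 f σz β S r 0) ^ 2 * phi2 f 0 r with hhdef
  have hhe : h = fun r => β r * Real.exp (∫ u in (0:ℝ)..r, f u - β u ^ 2 * S u / σz u ^ 2) ^ 2
      * Real.exp (-(∫ u in (0:ℝ)..r, f u)) := by
    funext r
    simp only [hhdef, phi1, phi2, intervalIntegral.integral_symm 0 r]
  have hhcont : ContinuousOn h (Set.Ico 0 T) := by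
    rw [hhe]
    intro x hx
    exact ((hβc x hx).mul ((Real.continuous_exp.continuousAt.comp_continuousWithinAt
        (primCWA T _ hfkcont x hx)).pow 2)).mul
      (Real.continuous_exp.continuousAt.comp_continuousWithinAt
        ((primCWA T f (hf.mono hsub) x hx).neg))
  have hII0 : ∀ t ∈ Set.Ico 0 T, IntervalIntegrable h volume 0 t := by
    intro t ht
    apply ContinuousOn.intervalIntegrable
    rw [Set.uIcc_of_le ht.1]
    exact hhcont.mono (fun y hy => ⟨hy.1, lt_of_le_of_lt hy.2 ht.2⟩)
  have hIIT : ∀ t ∈ Set.Ico 0 T, IntervalIntegrable h volume t T := by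
    intro t ht
    rw [intervalIntegrable_iff_integrableOn_Ioc_of_le ht.2.le,
      integrableOn_Ioc_iff_integrableOn_Ioo]
    exact hint.mono_set (fun y hy => ⟨le_trans ht.1 hy.1.le, hy.2⟩)
  set I0 : ℝ := ∫ r in (0:ℝ)..T, h r with hI0def
  have h0T : (0:ℝ) ∈ Set.Ico 0 T := ⟨le_refl 0, hT⟩
  have hI0pos : 0 < I0 := by rw [hI0def]; exact hIpos 0 h0T
  have htail : ∀ t ∈ Set.Ico 0 T, (∫ r in t..T, h r) = I0 - ∫ r in (0:ℝ)..t, h r := by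
    intro t ht
    have := intervalIntegral.integral_add_adjacent_intervals (hII0 t ht) (hIIT t ht)
    rw [hI0def]; linarith
  have hphi1pos : ∀ t : ℝ, 0 < phi1 f σz β S t 0 := fun t => by
    unfold phi1; exact Real.exp_pos _
  have hphi2pos : ∀ t : ℝ, 0 < phi2 f 0 t := fun t => by
    unfold phi2; exact Real.exp_pos _
  have hFOC' : ∀ t ∈ Set.Ico 0 T,
      h t = 2 * (β t ^ 2 * S t / σz t ^ 2) * (I0 - ∫ r in (0:ℝ)..t, h r) := by
    intro t ht
    have h1 := hFOC t ht
    rw [htail t ht] at h1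
    rw [← h1]
    simp only [hhdef]
    have hβt := (hβpos t ht).ne'
    have hSt := (hSpos t ht).ne'
    have hσt := (hσzpos t (hsub ht)).ne'
    field_simp
  have hE' : ∀ x ∈ Set.Ico 0 T, HasDerivWithinAt
      (fun r => (I0 - ∫ u in (0:ℝ)..r, h u) *
        Real.exp (2 * ∫ u in (0:ℝ)..r, β u ^ 2 * S u / σz u ^ 2)) 0 (Set.Ici x) x := by
    intro x hx
    have hJ := primHasDeriv T h hhcont x hx
    have hK := primHasDeriv T _ hkcont x hx
    have h2 : HasDerivWithinAt (fun r => I0 - ∫ u in (0:ℝ)..r, h u) (0 - h x)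
        (Set.Ici x) x := (hasDerivWithinAt_const x _ I0).sub hJ
    have h3 := (hK.const_mul (2:ℝ)).exp
    have h4 := h2.mul h3
    have h5 : (0 - h x) * Real.exp (2 * ∫ u in (0:ℝ)..x, β u ^ 2 * S u / σz u ^ 2) +
        (I0 - ∫ u in (0:ℝ)..x, h u) *
          (Real.exp (2 * ∫ u in (0:ℝ)..x, β u ^ 2 * S u / σz u ^ 2) *
            (2 * (β x ^ 2 * S x / σz x ^ 2))) = 0 := by
      rw [hFOC' x hx]; ring
    rwa [h5] at h4
  have hEconst : ∀ t ∈ Set.Ico 0 T,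
      (I0 - ∫ u in (0:ℝ)..t, h u) *
        Real.exp (2 * ∫ u in (0:ℝ)..t, β u ^ 2 * S u / σz u ^ 2) = I0 := by
    intro t ht
    have hsub2 : Set.Icc 0 t ⊆ Set.Ico 0 T := fun y hy => ⟨hy.1, lt_of_le_of_lt hy.2 ht.2⟩
    have hcE : ContinuousOn (fun r => (I0 - ∫ u in (0:ℝ)..r, h u) *
        Real.exp (2 * ∫ u in (0:ℝ)..r, β u ^ 2 * S u / σz u ^ 2)) (Set.Icc 0 t) := by
      intro x hx
      have hx' := hsub2 hx
      exact ((continuousWithinAt_const.sub (primCWA T h hhcont x hx')).mul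
        (Real.continuous_exp.continuousAt.comp_continuousWithinAt
          ((primCWA T _ hkcont x hx').const_smul (2:ℝ)))).mono hsub2
    have hkey := constant_of_has_deriv_right_zero hcE
      (fun x hx => hE' x ⟨hx.1, lt_of_lt_of_le hx.2 ht.2.le⟩) t (Set.right_mem_Icc.2 ht.1)
    simpa [intervalIntegral.integral_same] using hkey
  have hMain : ∀ t ∈ Set.Ico 0 T,
      Real.exp (∫ u in (0:ℝ)..t, f u) * σz t ^ 2 / (2 * β t * S t) = I0 := by
    intro t ht
    have hfII : IntervalIntegrable f volume 0 t := by
      apply ContinuousOn.intervalIntegrable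
      rw [Set.uIcc_of_le ht.1]
      exact hf.mono (Set.Icc_subset_Icc le_rfl ht.2.le)
    have hkII : IntervalIntegrable (fun u => β u ^ 2 * S u / σz u ^ 2) volume 0 t := by
      apply ContinuousOn.intervalIntegrable
      rw [Set.uIcc_of_le ht.1]
      exact hkcont.mono (fun y hy => ⟨hy.1, lt_of_le_of_lt hy.2 ht.2⟩)
    have h1 := hFOC t ht
    rw [htail t ht] at h1
    have hsubst : phi1 f σz β S t 0 = Real.exp ((∫ u in (0:ℝ)..t, f u) -
        ∫ u in (0:ℝ)..t, β u ^ 2 * S u / σz u ^ 2) := by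
      unfold phi1
      rw [intervalIntegral.integral_sub hfII hkII]
    have hsubst2 : phi2 f 0 t = Real.exp (-(∫ u in (0:ℝ)..t, f u)) := by
      unfold phi2
      rw [intervalIntegral.integral_symm 0 t]
    rw [hsubst, hsubst2] at h1
    have hE := hEconst t ht
    set F := ∫ u in (0:ℝ)..t, f u
    set K := ∫ u in (0:ℝ)..t, β u ^ 2 * S u / σz u ^ 2
    have e1 : Real.exp (F - K) ^ 2 * Real.exp (-F) * Real.exp (2 * K) = Real.exp F := by
      rw [pow_two, ← Real.exp_add, ← Real.exp_add, ← Real.exp_add]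
      congr 1; ring
    have e2 : Real.exp F * σz t ^ 2 / (2 * β t * S t) =
        Real.exp (F - K) ^ 2 * Real.exp (-F) * σz t ^ 2 / (2 * β t * S t) *
          Real.exp (2 * K) := by
      rw [← e1]; ring
    rw [e2, h1]
    exact hE
  intro t ht
  have A := hMain t ht
  have B : σz 0 ^ 2 / (2 * β 0 * s₀) = I0 := by
    have := hMain 0 h0T
    simpa [hS0, intervalIntegral.integral_same] using this
  have hβt := (hβpos t ht).ne'
  have hSt := (hSpos t ht).ne'
  have hσt := (hσzpos t (hsub ht)).ne'
  have hβ0 := (hβpos 0 h0T).ne'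
  have hσ0 := (hσzpos 0 (hsub h0T)).ne'
  have hs₀' := hs₀.ne'
  have hI0 := hI0pos.ne'
  have g1 : 2 * β t * S t / (σz t) ^ 2
      = 2 * β 0 * s₀ / (σz 0) ^ 2 * Real.exp (∫ u in (0 : ℝ)..t, f u) := by
    field_simp at A B ⊢
    linear_combination (β t * S t) * B - (β 0 * s₀) * A
  have g2 : 2 * β t * S t / (σz t) ^ 2 = 2 * β 0 * s₀ / (σz 0) ^ 2 * phi2 f t 0 := by
    rw [show phi2 f t 0 = Real.exp (∫ u in (0:ℝ)..t, f u) from rfl]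
    exact g1
  refine ⟨g1, g2, ?_⟩
  rw [← g2]
  field_simp
end
end
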